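/- arXiv:2503.11634 — 3 statements merged into one kernel-verified Lean document; each statement's English description precedes it below -/
import Mathlib

section
/- Let D be a 'balanced' distribution over unit vectors (invariant under multiplication by a uniformly random phase e^{iθ}). For any t₁, t₂ ∈ ℕ, the mixed state E_{φ←D}[|φ−⟩⟨φ−|^{⊗t₁} ⊗ |φ⟩⟨φ|^{⊗t₂}] equals E_{φ←D, c←Binomial(t₁,1/2)}[|Rep(t₁,c,φ)⟩⟨Rep(t₁,c,φ)| ⊗ |φ⟩⟨φ|^{⊗t₂}], where |φ−⟩ = (|0⟩−|φ⟩)/√2 and |Rep(t,c,φ)⟩ is the normalized uniform superposition over |Set(S,φ)⟩ with |S|=c. -/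
open Finset MeasureTheory

noncomputable section

/-- Sesquilinear inner product on `α → ℂ`. -/
def dotC {α : Type} [Fintype α] (u v : α → ℂ) : ℂ :=
  ∑ i, (starRingEnd ℂ) (u i) * v i

/-- Tensor product of the site vectors `v i`. -/
def tprodF {ι : Type} [Fintype ι] {d : ℕ} (v : ι → Fin d → ℂ) :
    (ι → Fin d) → ℂ :=
  fun f => ∏ i, v i (f i)

/-- Outer product `|u⟩⟨v|` realized as a kernel. -/
def outerF {α : Type} (u v : α → ℂ) : α × α → ℂ :=
  fun p => u p.1 * (starRingEnd ℂ) (v p.2)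

/-- `|φ-⟩^{⊗t₁} ⊗ |φ⟩^{⊗t₂}`, with the first `t₁` registers holding
`(|0⟩ - |φ⟩)/√2` and the remaining `t₂` registers holding `|φ⟩`. -/
def bigVec (t₁ t₂ d : ℕ) (e0 φ : Fin d → ℂ) :
    (Fin (t₁ + t₂) → Fin d) → ℂ :=
  tprodF (fun i => if (i : ℕ) < t₁ then ((Real.sqrt 2 : ℂ))⁻¹ • (e0 - φ) else φ)

/-- `|Rep(t₁,c,φ)⟩ ⊗ |φ⟩^{⊗t₂}`: the normalized uniform superposition over
`|Set(S,φ)⟩` with `S` of size `c` inside the first `t₁` registers, tensored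
with `t₂` copies of `|φ⟩`. -/
def repVecFull (t₁ t₂ d : ℕ) (e0 φ : Fin d → ℂ) (c : ℕ) :
    (Fin (t₁ + t₂) → Fin d) → ℂ :=
  ((Real.sqrt (t₁.choose c) : ℂ))⁻¹ •
    ∑ S ∈ powersetCard c ((univ : Finset (Fin (t₁ + t₂))).filter
        fun i : Fin (t₁ + t₂) => (i : ℕ) < t₁),
      tprodF (fun i : Fin (t₁ + t₂) => if (i : ℕ) < t₁ then (if i ∈ S then -φ else e0) else φ)

/-- A distribution over unit vectors is *balanced* if it is invariant under
multiplication by a uniformly random phase `e^{iθ}`, `θ ← [0,2π]`. -/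
def BalancedDist {d : ℕ} (μ : Measure (Fin d → ℂ)) : Prop :=
  Measure.map (fun p : ℝ × (Fin d → ℂ) => Complex.exp ((p.1 : ℂ) * Complex.I) • p.2)
      ((ENNReal.ofReal (2 * Real.pi)⁻¹ •
          volume.restrict (Set.Ioc (0 : ℝ) (2 * Real.pi))).prod μ)
    = μ

/-!
Expanding every factor `(|0⟩ - |φ⟩)/√2` writes `|φ-⟩^{⊗t₁} ⊗ |φ⟩^{⊗t₂}` as
`2^{-t₁/2} ∑_S |Set(S,φ)⟩ ⊗ |φ⟩^{⊗t₂}`, so the left-hand state is `2^{-t₁}` times the sum over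
pairs `S, S'` of the averaged outer products. Replacing `φ` by `e^{iθ} φ` multiplies the
`(S, S')` term by `e^{iθ(|S| - |S'|)}`; since the distribution is balanced, one may average over
`θ` first (Fubini), which kills every term with `|S| ≠ |S'|`. The surviving blocks
`|S| = |S'| = c` are `C(t₁,c) 2^{-t₁}` times the averaged `|Rep(t₁,c,φ)⟩⟨Rep(t₁,c,φ)|`.
-/

section Tensor

variable {ι : Type} [Fintype ι] {d : ℕ}

lemma outerF_smul_smul {α : Type} (a b : ℂ) (u v : α → ℂ) :
    outerF (a • u) (b • v) = (a * starRingEnd ℂ b) • outerF u v := by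
  funext p
  simp only [outerF, Pi.smul_apply, smul_eq_mul, map_mul]
  ring

lemma outerF_sum_sum {α κ : Type} (A B : Finset κ) (u v : κ → α → ℂ) :
    outerF (∑ S ∈ A, u S) (∑ S' ∈ B, v S') = ∑ S ∈ A, ∑ S' ∈ B, outerF (u S) (v S') := by
  funext p
  simp only [outerF, Finset.sum_apply, map_sum, Finset.sum_mul, Finset.mul_sum]
  exact Finset.sum_comm

lemma Continuous.outerF {X α : Type} [TopologicalSpace X] {u v : X → α → ℂ}
    (hu : Continuous u) (hv : Continuous v) : Continuous fun x => outerF (u x) (v x) := by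
  unfold _root_.outerF
  fun_prop

lemma Continuous.tprodF {X : Type} [TopologicalSpace X] {v : X → ι → Fin d → ℂ}
    (hv : Continuous v) : Continuous fun x => tprodF (v x) := by
  unfold _root_.tprodF
  fun_prop

lemma tprodF_smul (c : ι → ℂ) (v : ι → Fin d → ℂ) :
    tprodF (fun i => c i • v i) = (∏ i, c i) • tprodF v := by
  funext f
  simp [tprodF, Finset.prod_mul_distrib]

variable [DecidableEq ι]

lemma prod_ite_mem_add {R : Type} [CommSemiring R] (T : Finset ι) (x y z : ι → R) :
    ∏ i, (if i ∈ T then x i + y i else z i)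
      = ∑ S ∈ T.powerset, ∏ i, if i ∈ T then (if i ∈ S then x i else y i) else z i := by
  simp only [Finset.prod_ite, Finset.prod_add, Finset.sum_mul]
  refine Finset.sum_congr (by simp) fun S hS => ?_
  rw [Finset.mem_powerset] at hS
  simp [Finset.filter_mem_eq_inter, Finset.inter_eq_right.2 hS, Finset.filter_notMem_eq_sdiff]

/-- The paper's `|Set(S,φ)⟩` on the registers in `T`, tensored with `|φ⟩` on the others. -/
def setVec (T S : Finset ι) (e0 φ : Fin d → ℂ) : (ι → Fin d) → ℂ :=
  tprodF fun i => if i ∈ T then (if i ∈ S then -φ else e0) else φ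

lemma tprodF_ite_smul (T : Finset ι) (a : ℂ) (w v : ι → Fin d → ℂ) :
    tprodF (fun i => if i ∈ T then a • w i else v i)
      = a ^ #T • tprodF (fun i => if i ∈ T then w i else v i) := by
  have h : (fun i => if i ∈ T then a • w i else v i)
      = fun i => (if i ∈ T then a else 1) • (if i ∈ T then w i else v i) := by
    funext i
    split_ifs <;> simp
  rw [h, tprodF_smul, Fintype.prod_ite_mem, Finset.prod_const]

lemma tprodF_ite_smul_sub (T : Finset ι) (a : ℂ) (e0 φ : Fin d → ℂ) :
    tprodF (fun i => if i ∈ T then a • (e0 - φ) else φ)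
      = a ^ #T • ∑ S ∈ T.powerset, setVec T S e0 φ := by
  rw [tprodF_ite_smul]
  congr 1
  funext f
  simp only [tprodF, setVec, Finset.sum_apply, ite_apply, Pi.neg_apply, sub_eq_neg_add]
  exact prod_ite_mem_add T _ _ _

lemma setVec_smul {T S : Finset ι} (hS : S ⊆ T) (e0 φ : Fin d → ℂ) (z : ℂ) :
    setVec T S e0 (z • φ) = (z ^ #S * z ^ #Tᶜ) • setVec T S e0 φ := by
  have h : (fun i => if i ∈ T then (if i ∈ S then -(z • φ) else e0) else z • φ)
      = fun i => ((if i ∈ S then z else 1) * (if i ∈ Tᶜ then z else 1)) •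
          (if i ∈ T then (if i ∈ S then -φ else e0) else φ) := by
    funext i
    by_cases hT : i ∈ T <;> by_cases hS' : i ∈ S <;> simp_all [@hS i]
  rw [setVec, h, tprodF_smul, Finset.prod_mul_distrib, Fintype.prod_ite_mem, Fintype.prod_ite_mem,
    Finset.prod_const, Finset.prod_const, setVec]

lemma conj_exp_mul_I (θ : ℝ) :
    starRingEnd ℂ (Complex.exp (θ * Complex.I)) = (Complex.exp (θ * Complex.I))⁻¹ := by
  rw [← Complex.exp_conj, ← Complex.exp_neg, map_mul, Complex.conj_ofReal, Complex.conj_I,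
    mul_neg]

lemma outerF_setVec_exp_smul {T S S' : Finset ι} (hS : S ⊆ T) (hS' : S' ⊆ T)
    (e0 φ : Fin d → ℂ) (θ : ℝ) :
    outerF (setVec T S e0 (Complex.exp (θ * Complex.I) • φ))
        (setVec T S' e0 (Complex.exp (θ * Complex.I) • φ))
      = Complex.exp (θ * Complex.I) ^ ((#S : ℤ) - #S') •
          outerF (setVec T S e0 φ) (setVec T S' e0 φ) := by
  have hz : Complex.exp (θ * Complex.I) ≠ 0 := Complex.exp_ne_zero _
  rw [setVec_smul hS, setVec_smul hS', outerF_smul_smul, map_mul, map_pow, map_pow,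
    conj_exp_mul_I, zpow_sub₀ hz, zpow_natCast, zpow_natCast, inv_pow, inv_pow]
  congr 1
  field_simp

end Tensor

lemma integral_exp_mul_I_zpow_eq_zero {m : ℤ} (hm : m ≠ 0) :
    ∫ θ in Set.Ioc 0 (2 * Real.pi), Complex.exp (θ * Complex.I) ^ m = 0 := by
  have hc : (m : ℂ) * Complex.I ≠ 0 := mul_ne_zero (Int.cast_ne_zero.2 hm) Complex.I_ne_zero
  have h : ∀ θ : ℝ, Complex.exp (θ * Complex.I) ^ m = Complex.exp (m * Complex.I * θ) := by
    intro θ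
    rw [← Complex.exp_int_mul]
    ring_nf
  simp_rw [h, ← intervalIntegral.integral_of_le Real.two_pi_pos.le, integral_exp_mul_complex hc]
  push_cast
  rw [show (m : ℂ) * Complex.I * (2 * Real.pi) = m * (2 * Real.pi * Complex.I) by ring,
    Complex.exp_int_mul_two_pi_mul_I]
  simp

theorem BalancedDist.integral_eq_zero {d : ℕ} {E : Type} [NormedAddCommGroup E]
    [NormedSpace ℂ E] [CompleteSpace E] {μ : Measure (Fin d → ℂ)} [SFinite μ]
    (hbal : BalancedDist μ)
    {F : (Fin d → ℂ) → E} (hF : Integrable F μ) {m : ℤ} (hm : m ≠ 0)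
    (hcov : ∀ (θ : ℝ) φ,
      F (Complex.exp (θ * Complex.I) • φ) = Complex.exp (θ * Complex.I) ^ m • F φ) :
    ∫ φ, F φ ∂μ = 0 := by
  set ν : Measure ℝ :=
    ENNReal.ofReal (2 * Real.pi)⁻¹ • volume.restrict (Set.Ioc 0 (2 * Real.pi))
  set Φ : ℝ × (Fin d → ℂ) → (Fin d → ℂ) := fun p => Complex.exp (p.1 * Complex.I) • p.2
  have hΦ : Measurable Φ := by fun_prop
  have hmap : Measure.map Φ (ν.prod μ) = μ := hbal
  have hFm : AEStronglyMeasurable F (Measure.map Φ (ν.prod μ)) := by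
    rw [hmap]; exact hF.1
  have hFΦ : Integrable (F ∘ Φ) (ν.prod μ) :=
    (integrable_map_measure hFm hΦ.aemeasurable).1 (by rwa [hmap])
  calc ∫ φ, F φ ∂μ = ∫ φ, F φ ∂(Measure.map Φ (ν.prod μ)) := by rw [hmap]
    _ = ∫ p, F (Φ p) ∂(ν.prod μ) := integral_map hΦ.aemeasurable hFm
    _ = ∫ θ, ∫ φ, Complex.exp (θ * Complex.I) ^ m • F φ ∂μ ∂ν := by
        rw [integral_prod (fun p => F (Φ p)) hFΦ]
        simp only [Φ, hcov]
    _ = (∫ θ, Complex.exp (θ * Complex.I) ^ m ∂ν) • ∫ φ, F φ ∂μ := by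
        simp_rw [integral_smul]
        exact integral_smul_const _ _
    _ = 0 := by
        rw [integral_smul_measure, integral_exp_mul_I_zpow_eq_zero hm, smul_zero, zero_smul]

lemma norm_le_one_of_dotC_self_eq_one {d : ℕ} {φ : Fin d → ℂ} (h : dotC φ φ = 1) : ‖φ‖ ≤ 1 := by
  have hsum : ∑ i, ‖φ i‖ ^ 2 = 1 := by
    have h' : dotC φ φ = ((∑ i, ‖φ i‖ ^ 2 : ℝ) : ℂ) := by
      simp [dotC, Complex.conj_mul']
    exact_mod_cast h' ▸ h
  refine (pi_norm_le_iff_of_nonneg zero_le_one).2 fun j => ?_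
  have hj : ‖φ j‖ ^ 2 ≤ 1 :=
    hsum ▸ Finset.single_le_sum (fun i _ => sq_nonneg ‖φ i‖) (Finset.mem_univ j)
  exact (sq_le_one_iff₀ (norm_nonneg _)).1 hj

lemma Continuous.integrable_of_ae_mem_compact {X E : Type} [TopologicalSpace X] [T2Space X]
    [MeasurableSpace X] [OpensMeasurableSpace X] [NormedAddCommGroup E] {μ : Measure X}
    [IsFiniteMeasureOnCompacts μ] {F : X → E} (hF : Continuous F) {K : Set X} (hK : IsCompact K)
    (hμ : ∀ᵐ x ∂μ, x ∈ K) : Integrable F μ := by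
  rw [← Measure.restrict_eq_self_of_ae_mem hμ]
  exact hF.continuousOn.integrableOn_compact hK

lemma Finset.sum_powerset_sum_powerset_eq_sum_range {α β : Type} [AddCommMonoid β]
    (T : Finset α) (G : Finset α → Finset α → β)
    (hG : ∀ S ⊆ T, ∀ S' ⊆ T, #S ≠ #S' → G S S' = 0) :
    ∑ S ∈ T.powerset, ∑ S' ∈ T.powerset, G S S'
      = ∑ c ∈ range (#T + 1), ∑ S ∈ powersetCard c T, ∑ S' ∈ powersetCard c T, G S S' := by
  rw [Finset.sum_powerset]
  refine Finset.sum_congr rfl fun c _ => Finset.sum_congr rfl fun S hS => ?_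
  rw [Finset.mem_powersetCard] at hS
  refine (Finset.sum_subset (fun S' hS' => ?_) fun S' hS' hS'c => ?_).symm
  · exact Finset.mem_powerset.2 (Finset.mem_powersetCard.1 hS').1
  · rw [Finset.mem_powerset] at hS'
    exact hG S hS.1 S' hS' fun h => hS'c (Finset.mem_powersetCard.2 ⟨hS', h ▸ hS.2⟩)

section Mixture

variable {ι : Type} [Fintype ι] [DecidableEq ι] {d : ℕ} {μ : Measure (Fin d → ℂ)}
  [IsFiniteMeasure μ]

lemma continuous_outerF_setVec (T S S' : Finset ι) (e0 : Fin d → ℂ) :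
    Continuous fun φ => outerF (setVec T S e0 φ) (setVec T S' e0 φ) := by
  have h : ∀ S : Finset ι, Continuous fun φ => setVec T S e0 φ := fun S =>
    Continuous.tprodF (continuous_pi fun i => by split_ifs <;> fun_prop)
  exact (h S).outerF (h S')

lemma integrable_outerF_setVec (hunit : ∀ᵐ φ ∂μ, dotC φ φ = 1) (T S S' : Finset ι)
    (e0 : Fin d → ℂ) : Integrable (fun φ => outerF (setVec T S e0 φ) (setVec T S' e0 φ)) μ :=
  (continuous_outerF_setVec T S S' e0).integrable_of_ae_mem_compact (isCompact_closedBall 0 1)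
    (hunit.mono fun _ hφ => mem_closedBall_zero_iff.2 (norm_le_one_of_dotC_self_eq_one hφ))

lemma integral_outerF_setVec_eq_zero (hunit : ∀ᵐ φ ∂μ, dotC φ φ = 1) (hbal : BalancedDist μ)
    {T S S' : Finset ι} (hS : S ⊆ T) (hS' : S' ⊆ T) (hne : #S ≠ #S') (e0 : Fin d → ℂ) :
    ∫ φ, outerF (setVec T S e0 φ) (setVec T S' e0 φ) ∂μ = 0 :=
  hbal.integral_eq_zero (integrable_outerF_setVec hunit T S S' e0)
    (sub_ne_zero.2 (by exact_mod_cast hne)) fun θ φ => outerF_setVec_exp_smul hS hS' e0 φ θ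

lemma integral_outerF_smul_sum_setVec (hunit : ∀ᵐ φ ∂μ, dotC φ φ = 1) (T : Finset ι)
    (e0 : Fin d → ℂ) (a : ℝ) (A : Finset (Finset ι)) :
    ∫ φ, outerF ((a : ℂ) • ∑ S ∈ A, setVec T S e0 φ) ((a : ℂ) • ∑ S ∈ A, setVec T S e0 φ) ∂μ
      = (a ^ 2) • ∑ S ∈ A, ∑ S' ∈ A, ∫ φ, outerF (setVec T S e0 φ) (setVec T S' e0 φ) ∂μ := by
  have hint := integrable_outerF_setVec hunit T (μ := μ) (e0 := e0)
  simp_rw [outerF_smul_smul, outerF_sum_sum, Complex.conj_ofReal, ← Complex.ofReal_mul,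
    Complex.coe_smul, ← sq]
  rw [integral_smul, integral_finsetSum _ fun S _ => integrable_finsetSum _ fun S' _ => hint S S']
  simp_rw [integral_finsetSum _ fun S' _ => hint _ S']

theorem integral_outerF_phiMinus_eq_sum (hunit : ∀ᵐ φ ∂μ, dotC φ φ = 1) (hbal : BalancedDist μ)
    (T : Finset ι) (e0 : Fin d → ℂ) :
    ∫ φ, outerF (tprodF fun i => if i ∈ T then ((Real.sqrt 2 : ℂ))⁻¹ • (e0 - φ) else φ)
        (tprodF fun i => if i ∈ T then ((Real.sqrt 2 : ℂ))⁻¹ • (e0 - φ) else φ) ∂μ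
      = ∑ c ∈ range (#T + 1), (((#T).choose c : ℝ) / 2 ^ #T) •
          ∫ φ, outerF (((Real.sqrt ((#T).choose c) : ℂ))⁻¹ •
              ∑ S ∈ powersetCard c T, setVec T S e0 φ)
            (((Real.sqrt ((#T).choose c) : ℂ))⁻¹ • ∑ S ∈ powersetCard c T, setVec T S e0 φ)
            ∂μ := by
  have hv : ∀ φ, (tprodF fun i => if i ∈ T then ((Real.sqrt 2 : ℂ))⁻¹ • (e0 - φ) else φ)
      = (((Real.sqrt 2)⁻¹ ^ #T : ℝ) : ℂ) • ∑ S ∈ T.powerset, setVec T S e0 φ := by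
    intro φ
    rw [tprodF_ite_smul_sub]
    push_cast
    rfl
  have hr : ∀ c : ℕ, ((Real.sqrt ((#T).choose c) : ℂ))⁻¹
      = (((Real.sqrt ((#T).choose c))⁻¹ : ℝ) : ℂ) := fun c => by push_cast; rfl
  simp_rw [hv, hr, integral_outerF_smul_sum_setVec hunit, smul_smul]
  rw [Finset.sum_powerset_sum_powerset_eq_sum_range T _
    fun S hS S' hS' hne => integral_outerF_setVec_eq_zero hunit hbal hS hS' hne e0,
    Finset.smul_sum]
  refine Finset.sum_congr rfl fun c hc => ?_
  have hC : (0 : ℝ) < (#T).choose c := by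
    exact_mod_cast Nat.choose_pos (Nat.lt_succ_iff.1 (Finset.mem_range.1 hc))
  congr 1
  rw [← pow_mul, mul_comm #T, pow_mul, inv_pow (√2), Real.sq_sqrt zero_le_two,
    inv_pow (√_), Real.sq_sqrt hC.le, inv_pow]
  field_simp

end Mixture

theorem balanced_phiMinus_mixture_general (t₁ t₂ d : ℕ) (e0 : Fin d → ℂ)
    (μ : Measure (Fin d → ℂ)) [IsProbabilityMeasure μ]
    (hsupp : ∀ᵐ φ ∂μ, dotC φ φ = 1 ∧ dotC e0 φ = 0)
    (hbal : BalancedDist μ) :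
    (∫ φ, outerF (bigVec t₁ t₂ d e0 φ) (bigVec t₁ t₂ d e0 φ) ∂μ)
      = ∑ c ∈ range (t₁ + 1),
          ((t₁.choose c : ℝ) / 2 ^ t₁) •
            ∫ φ, outerF (repVecFull t₁ t₂ d e0 φ c)
                (repVecFull t₁ t₂ d e0 φ c) ∂μ := by
  set T : Finset (Fin (t₁ + t₂)) := {i | (i : ℕ) < t₁}
  have hT : #T = t₁ := by simp [T, Fin.card_filter_val_lt]
  have hv : ∀ φ, bigVec t₁ t₂ d e0 φ
      = tprodF fun i => if i ∈ T then ((Real.sqrt 2 : ℂ))⁻¹ • (e0 - φ) else φ := by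
    simp [bigVec, T]
  have hr : ∀ φ c, repVecFull t₁ t₂ d e0 φ c
      = ((Real.sqrt (t₁.choose c) : ℂ))⁻¹ • ∑ S ∈ powersetCard c T, setVec T S e0 φ := by
    simp [repVecFull, setVec, T]
  simp_rw [hv, hr]
  rw [integral_outerF_phiMinus_eq_sum (hsupp.mono fun _ h => h.1) hbal T e0, hT]

/-- For a balanced distribution `D` over unit vectors orthogonal to `|0⟩`,
`E_{φ←D}[|φ-⟩⟨φ-|^{⊗t₁} ⊗ |φ⟩⟨φ|^{⊗t₂}]
  = E_{φ←D, c←Binomial(t₁,1/2)}[|Rep(t₁,c,φ)⟩⟨Rep(t₁,c,φ)| ⊗ |φ⟩⟨φ|^{⊗t₂}]`. -/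
theorem balanced_phiMinus_mixture (t₁ t₂ d : ℕ) (e0 : Fin d → ℂ)
    (h00 : dotC e0 e0 = 1)
    (μ : Measure (Fin d → ℂ)) [IsProbabilityMeasure μ]
    (hsupp : ∀ᵐ φ ∂μ, dotC φ φ = 1 ∧ dotC e0 φ = 0)
    (hbal : BalancedDist μ) :
    (∫ φ, outerF (bigVec t₁ t₂ d e0 φ) (bigVec t₁ t₂ d e0 φ) ∂μ)
      = ∑ c ∈ range (t₁ + 1),
          ((t₁.choose c : ℝ) / 2 ^ t₁) •
            ∫ φ, outerF (repVecFull t₁ t₂ d e0 φ c)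
                (repVecFull t₁ t₂ d e0 φ c) ∂μ :=
  balanced_phiMinus_mixture_general t₁ t₂ d e0 μ hsupp hbal

end
end

section
/- Let A₁,A₂ and B₁,B₂ be register groups of a₁, a₂, b₁, b₂ subsystems of dimension N+1, and T a collision-free subset of [N] with a₁+a₂ ≤ |T| ≤ a₁+a₂+b₁+b₂. Then the vector |𝔷(T,(B₁,B₂))⟩ (the uniform superposition over arrangements of T∪{0,…,0} in registers A₁A₂B₁B₂ with all zeros confined to B₁∪B₂) decomposes as Σ_X √α_{|X|} |𝔷(X,B₁)⟩ ⊗ |𝔷(T∖X,B₂)⟩, where the sum is over X ⊆ T with a₁ ≤ |X| ≤ a₁+b₁ and a₂ ≤ |T|−|X| ≤ a₂+b₂, and α_i = C(b₁, i−a₁)·C(b₂, |T|−i−a₂) / (C(b₁+b₂, |T|−a₁−a₂)·C(|T|, i)). -/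
open Finset

open scoped Classical

noncomputable section

/-- `|𝔷(T,B)⟩`: the normalized uniform superposition over sequences of length
`a + b` over `[N] ∪ {0}` whose nonzero entries enumerate the collision-free
type `T` exactly once each, with the first `a` positions (register group `A`)
required to be nonzero. -/
def zVec (N a b : ℕ) (T : Finset (Fin N)) : (Fin (a + b) → Fin (N + 1)) → ℂ :=
  fun v =>
    if ((∀ i : Fin (a + b), (i : ℕ) < a → v i ≠ 0) ∧
        (∀ i j, v i ≠ 0 → v i = v j → i = j) ∧
        (∀ x : Fin N, x.succ ∈ Set.range v ↔ x ∈ T)) then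
      ((Real.sqrt (Nat.factorial T.card * b.choose (T.card - a)) : ℂ))⁻¹
    else 0

/-- `|𝔷(T,(B₁,B₂))⟩` on the joint registers `(A₁,B₁),(A₂,B₂)`: zeros are
confined to `B₁ ∪ B₂` and the nonzero entries enumerate `T`. -/
def zVec₂ (N a₁ b₁ a₂ b₂ : ℕ) (T : Finset (Fin N)) :
    ((Fin (a₁ + b₁) ⊕ Fin (a₂ + b₂)) → Fin (N + 1)) → ℂ :=
  fun v =>
    if ((∀ i : Fin (a₁ + b₁), (i : ℕ) < a₁ → v (Sum.inl i) ≠ 0) ∧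
        (∀ i : Fin (a₂ + b₂), (i : ℕ) < a₂ → v (Sum.inr i) ≠ 0) ∧
        (∀ i j, v i ≠ 0 → v i = v j → i = j) ∧
        (∀ x : Fin N, x.succ ∈ Set.range v ↔ x ∈ T)) then
      ((Real.sqrt (Nat.factorial T.card *
          (b₁ + b₂).choose (T.card - a₁ - a₂)) : ℂ))⁻¹
    else 0

/-- Tensor product along the direct-sum register decomposition. -/
def tensF {N a₁ b₁ a₂ b₂ : ℕ} (u : (Fin (a₁ + b₁) → Fin (N + 1)) → ℂ)
    (w : (Fin (a₂ + b₂) → Fin (N + 1)) → ℂ) :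
    ((Fin (a₁ + b₁) ⊕ Fin (a₂ + b₂)) → Fin (N + 1)) → ℂ :=
  fun v => u (fun i => v (Sum.inl i)) * w (fun i => v (Sum.inr i))

/-! A basis sequence `v` on the joint registers is an arrangement of `T` exactly when its two
blocks are arrangements of `X` and `T \ X`, where `X` is the set of labels occurring in the first
block. So for each `v` at most one term of the sum survives, and with `t = |T|`, `k = |X|` the
claim reduces to
`√α_k · (k! C(b₁, k - a₁) (t - k)! C(b₂, t - k - a₂))^(-1/2) = (t! C(b₁ + b₂, t - a₁ - a₂))^(-1/2)`,
which is `t! = C(t, k) k! (t - k)!`. -/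

open scoped Nat

namespace ZVec

variable {N : ℕ} {ι κ : Type*}

def labelSet (u : ι → Fin (N + 1)) : Finset (Fin N) :=
  univ.filter fun x => x.succ ∈ Set.range u

def InjOnNonzero (u : ι → Fin (N + 1)) : Prop :=
  ∀ i j, u i ≠ 0 → u i = u j → i = j

def IsArrangement {n : ℕ} (a : ℕ) (T : Finset (Fin N)) (u : Fin n → Fin (N + 1)) : Prop :=
  (∀ i : Fin n, (i : ℕ) < a → u i ≠ 0) ∧ InjOnNonzero u ∧ labelSet u = T

def IsArrangement₂ {n₁ n₂ : ℕ} (a₁ a₂ : ℕ) (T : Finset (Fin N))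
    (v : Fin n₁ ⊕ Fin n₂ → Fin (N + 1)) : Prop :=
  (∀ i : Fin n₁, (i : ℕ) < a₁ → v (Sum.inl i) ≠ 0) ∧
    (∀ j : Fin n₂, (j : ℕ) < a₂ → v (Sum.inr j) ≠ 0) ∧ InjOnNonzero v ∧ labelSet v = T

@[simp] lemma mem_labelSet {u : ι → Fin (N + 1)} {x : Fin N} :
    x ∈ labelSet u ↔ x.succ ∈ Set.range u := by
  simp [labelSet]

lemma labelSet_eq_iff {u : ι → Fin (N + 1)} {T : Finset (Fin N)} :
    labelSet u = T ↔ ∀ x : Fin N, x.succ ∈ Set.range u ↔ x ∈ T := by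
  simp [Finset.ext_iff]

lemma zVec_apply (a b : ℕ) (T : Finset (Fin N)) (u : Fin (a + b) → Fin (N + 1)) :
    zVec N a b T u = if IsArrangement a T u then
      ((Real.sqrt (T.card ! * b.choose (T.card - a)) : ℂ))⁻¹ else 0 := by
  simp only [zVec, IsArrangement, InjOnNonzero, labelSet_eq_iff]

lemma zVec₂_apply (a₁ b₁ a₂ b₂ : ℕ) (T : Finset (Fin N))
    (v : Fin (a₁ + b₁) ⊕ Fin (a₂ + b₂) → Fin (N + 1)) :
    zVec₂ N a₁ b₁ a₂ b₂ T v =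
      if IsArrangement₂ a₁ a₂ T v then
        ((Real.sqrt (T.card ! * (b₁ + b₂).choose (T.card - a₁ - a₂)) : ℂ))⁻¹
      else 0 := by
  simp only [zVec₂, IsArrangement₂, InjOnNonzero, labelSet_eq_iff]

lemma labelSet_sum (v : ι ⊕ κ → Fin (N + 1)) :
    labelSet v = labelSet (fun i => v (Sum.inl i)) ∪ labelSet (fun j => v (Sum.inr j)) := by
  ext x
  simp [Sum.exists]

lemma injOnNonzero_sum_iff {v : ι ⊕ κ → Fin (N + 1)} :
    InjOnNonzero v ↔ InjOnNonzero (fun i => v (Sum.inl i)) ∧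
      InjOnNonzero (fun j => v (Sum.inr j)) ∧
      Disjoint (labelSet fun i => v (Sum.inl i)) (labelSet fun j => v (Sum.inr j)) := by
  constructor
  · intro hv
    refine ⟨fun i j h e => Sum.inl_injective (hv _ _ h e),
      fun i j h e => Sum.inr_injective (hv _ _ h e), Finset.disjoint_left.2 ?_⟩
    intro x hx hy
    obtain ⟨i, hi⟩ := mem_labelSet.1 hx
    obtain ⟨j, hj⟩ := mem_labelSet.1 hy
    exact Sum.inl_ne_inr (hv _ _ (hi.trans_ne x.succ_ne_zero) (hi.trans hj.symm))
  · rintro ⟨hl, hr, hd⟩ (i | i) (j | j) h e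
    · exact congrArg Sum.inl (hl i j h e)
    · obtain ⟨x, hx⟩ := Fin.exists_succ_eq_of_ne_zero h
      exact (Finset.disjoint_left.1 hd (mem_labelSet.2 ⟨i, hx.symm⟩)
        (mem_labelSet.2 ⟨j, (hx.trans e).symm⟩)).elim
    · obtain ⟨x, hx⟩ := Fin.exists_succ_eq_of_ne_zero h
      exact (Finset.disjoint_left.1 hd (mem_labelSet.2 ⟨j, (hx.trans e).symm⟩)
        (mem_labelSet.2 ⟨i, hx.symm⟩)).elim
    · exact congrArg Sum.inr (hr i j h e)

lemma isArrangement_sum_iff {n₁ n₂ a₁ a₂ : ℕ} {T X : Finset (Fin N)} (hX : X ⊆ T)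
    (v : Fin n₁ ⊕ Fin n₂ → Fin (N + 1)) :
    IsArrangement a₁ X (fun i => v (Sum.inl i)) ∧
        IsArrangement a₂ (T \ X) (fun j => v (Sum.inr j)) ↔
      IsArrangement₂ a₁ a₂ T v ∧ X = labelSet fun i => v (Sum.inl i) := by
  rw [IsArrangement₂, injOnNonzero_sum_iff, labelSet_sum]
  constructor
  · rintro ⟨⟨h₁, i₁, rfl⟩, h₂, i₂, hw⟩
    exact ⟨⟨h₁, h₂, ⟨i₁, i₂, hw ▸ disjoint_sdiff⟩, hw ▸ union_sdiff_of_subset hX⟩, rfl⟩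
  · rintro ⟨⟨h₁, h₂, ⟨i₁, i₂, hd⟩, rfl⟩, rfl⟩
    exact ⟨⟨h₁, i₁, rfl⟩, h₂, i₂, (union_sdiff_cancel_left hd).symm⟩

lemma IsArrangement₂.split {n₁ n₂ a₁ a₂ : ℕ} {T : Finset (Fin N)}
    {v : Fin n₁ ⊕ Fin n₂ → Fin (N + 1)} (h : IsArrangement₂ a₁ a₂ T v) :
    (labelSet fun i => v (Sum.inl i)) ⊆ T ∧
      IsArrangement a₁ (labelSet fun i => v (Sum.inl i)) (fun i => v (Sum.inl i)) ∧
      IsArrangement a₂ (T \ labelSet fun i => v (Sum.inl i)) (fun j => v (Sum.inr j)) := by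
  have hXT : (labelSet fun i => v (Sum.inl i)) ⊆ T := h.2.2.2 ▸ labelSet_sum v ▸ subset_union_left
  exact ⟨hXT, (isArrangement_sum_iff hXT v).2 ⟨h, rfl⟩⟩

lemma card_labelSet [Fintype ι] {u : ι → Fin (N + 1)} (hu : InjOnNonzero u) :
    (labelSet u).card = (univ.filter fun i => u i ≠ 0).card := by
  have hinj : Set.InjOn u ↑(univ.filter fun i => u i ≠ 0) := fun i hi j _ e =>
    hu i j (by simpa using hi) e
  rw [← card_map (Fin.succEmb N), ← Finset.card_image_of_injOn hinj]
  congr 1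
  ext y
  cases y using Fin.cases with
  | zero => simp
  | succ x =>
    simp only [mem_map, mem_labelSet, Set.mem_range, Fin.coe_succEmb, Fin.succ_inj,
      exists_eq_right, ne_eq, mem_image, mem_filter, mem_univ, true_and]
    exact ⟨fun ⟨i, hi⟩ => ⟨i, hi.trans_ne x.succ_ne_zero, hi⟩, fun ⟨i, _, hi⟩ => ⟨i, hi⟩⟩

lemma IsArrangement.card_bounds {a b : ℕ} {T : Finset (Fin N)} {u : Fin (a + b) → Fin (N + 1)}
    (h : IsArrangement a T u) : a ≤ T.card ∧ T.card ≤ a + b := by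
  obtain ⟨hpre, hinj, rfl⟩ := h
  rw [card_labelSet hinj]
  constructor
  · have hsub : (univ : Finset (Fin a)).map (Fin.castAddEmb b) ⊆ univ.filter fun i => u i ≠ 0 :=
      fun i hi => by
        obtain ⟨j, -, rfl⟩ := mem_map.1 hi
        simpa using hpre _ j.2
    simpa using card_le_card hsub
  · simpa using card_le_univ (univ.filter fun i => u i ≠ 0)

lemma sqrt_div_choose_mul_inv_sqrt_mul_inv_sqrt {A B C : ℝ} (hA : 0 < A) (hB : 0 < B)
    (hC : 0 < C) {t k : ℕ} (hk : k ≤ t) :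
    √(A * B / (C * t.choose k)) * ((√(k ! * A))⁻¹ * (√((t - k)! * B))⁻¹) =
      (√(t ! * C))⁻¹ := by
  have hD : (0 : ℝ) < t.choose k := by exact_mod_cast Nat.choose_pos hk
  have hfact : (t.choose k : ℝ) * k ! * (t - k)! = t ! := by
    exact_mod_cast Nat.choose_mul_factorial_mul_factorial hk
  rw [← Real.sqrt_inv, ← Real.sqrt_inv, ← Real.sqrt_mul (by positivity),
    ← Real.sqrt_mul (by positivity), ← Real.sqrt_inv, ← hfact]
  congr 1
  field_simp

end ZVec

open ZVec in
theorem zVec_split_general (N a₁ a₂ b₁ b₂ : ℕ) (T : Finset (Fin N)) :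
    zVec₂ N a₁ b₁ a₂ b₂ T
      = ∑ X ∈ T.powerset.filter (fun X =>
            a₁ ≤ X.card ∧ X.card ≤ a₁ + b₁ ∧
            a₂ ≤ T.card - X.card ∧ T.card - X.card ≤ a₂ + b₂),
          (Real.sqrt
              (((b₁.choose (X.card - a₁) : ℝ) *
                  (b₂.choose (T.card - X.card - a₂) : ℝ)) /
                (((b₁ + b₂).choose (T.card - a₁ - a₂) : ℝ) *
                  (T.card.choose X.card : ℝ))) : ℂ) •
            tensF (zVec N a₁ b₁ X) (zVec N a₂ b₂ (T \ X)) := by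
  funext v
  simp only [zVec₂_apply, Finset.sum_apply, Pi.smul_apply, smul_eq_mul, tensF, zVec_apply,
    ite_zero_mul_ite_zero]
  simp only [mul_ite, mul_zero]
  rw [Finset.sum_congr rfl fun X hX =>
    if_congr (isArrangement_sum_iff (mem_powerset.1 (mem_filter.1 hX).1) v) rfl rfl]
  simp only [ite_and, sum_ite_irrel, sum_const_zero, sum_ite_eq']
  by_cases hP : IsArrangement₂ a₁ a₂ T v
  · obtain ⟨hXT, hu, hw⟩ := hP.split
    set X := labelSet fun i => v (Sum.inl i)
    have hX := hu.card_bounds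
    have hTX := hw.card_bounds
    rw [card_sdiff_of_subset hXT] at hTX ⊢
    have hmem : X ∈ T.powerset.filter (fun X =>
        a₁ ≤ X.card ∧ X.card ≤ a₁ + b₁ ∧ a₂ ≤ T.card - X.card ∧ T.card - X.card ≤ a₂ + b₂) :=
      mem_filter.2 ⟨mem_powerset.2 hXT, hX.1, hX.2, hTX.1, hTX.2⟩
    rw [if_pos hP, if_pos hP, if_pos hmem]
    exact_mod_cast (sqrt_div_choose_mul_inv_sqrt_mul_inv_sqrt (A := b₁.choose (X.card - a₁))
      (B := b₂.choose (T.card - X.card - a₂)) (C := (b₁ + b₂).choose (T.card - a₁ - a₂))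
      (by exact_mod_cast Nat.choose_pos (by omega)) (by exact_mod_cast Nat.choose_pos (by omega))
      (by exact_mod_cast Nat.choose_pos (by omega)) (card_le_card hXT)).symm
  · rw [if_neg hP, if_neg hP]

/-- Decomposition of `|𝔷(T,(B₁,B₂))⟩` into a superposition of
`|𝔷(X,B₁)⟩ ⊗ |𝔷(T∖X,B₂)⟩` with hypergeometric amplitudes `√α_{|X|}`. -/
theorem zVec_split (N a₁ a₂ b₁ b₂ : ℕ) (T : Finset (Fin N))
    (h1 : a₁ + a₂ ≤ T.card) (h2 : T.card ≤ a₁ + a₂ + b₁ + b₂) :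
    zVec₂ N a₁ b₁ a₂ b₂ T
      = ∑ X ∈ T.powerset.filter (fun X =>
            a₁ ≤ X.card ∧ X.card ≤ a₁ + b₁ ∧
            a₂ ≤ T.card - X.card ∧ T.card - X.card ≤ a₂ + b₂),
          (Real.sqrt
              (((b₁.choose (X.card - a₁) : ℝ) *
                  (b₂.choose (T.card - X.card - a₂) : ℝ)) /
                (((b₁ + b₂).choose (T.card - a₁ - a₂) : ℝ) *
                  (T.card.choose X.card : ℝ))) : ℂ) •
            tensF (zVec N a₁ b₁ X) (zVec N a₂ b₂ (T \ X)) :=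
  zVec_split_general N a₁ a₂ b₁ b₂ T

end
end

section
/- Let A₁,A₂,B₁,B₂ contain a₁,a₂,b₁,b₂ systems of dimension N+1, T ⊆ [N] collision-free, and b₁^f, b₂^f nonnegative integers with |T| = a₁+a₂+b₁^f+b₂^f. Then |𝔷²(T,B₁,B₂)^{b₁^f,b₂^f}⟩ = C(|T|, a₁+b₁^f)^{−1/2} Σ_{X⊆T, |X|=a₁+b₁^f} |𝔷(X,B₁)⟩ ⊗ |𝔷(T∖X,B₂)⟩. -/
/-!
At a basis sequence `v` on `B₁ ⊕ B₂`, the summand for `X` is nonzero exactly when `v` is a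
collision-free sequence of type `T` with nonzero `A`-registers whose left half has type `X`.
So only `X = seqType (v ∘ Sum.inl)` contributes. The size of this set is `a₁` plus the number of
nonzero `B₁` entries, and its complement in `T` is the type of the right half, so the condition
`|X| = a₁ + b₁f` is equivalent to the two counting conditions of `𝔷²` (given `|T| = a₁+a₂+b₁f+b₂f`).
The amplitudes agree since `|T|! = C(|T|, k) k! (|T| - k)!`.
-/

open Finset

open scoped Classical

noncomputable section

/-- `|𝔷²(T,B₁,B₂)^{b₁^f,b₂^f}⟩`: normalized uniform superposition over
sequences of type `T` (padded with zeros), all `A₁, A₂` positions nonzero,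
exactly `b₁f` nonzero entries among `B₁` and exactly `b₂f` among `B₂`. -/
def zVecCount (N a₁ b₁ a₂ b₂ b₁f b₂f : ℕ) (T : Finset (Fin N)) :
    ((Fin (a₁ + b₁) ⊕ Fin (a₂ + b₂)) → Fin (N + 1)) → ℂ :=
  fun v =>
    if ((∀ i : Fin (a₁ + b₁), (i : ℕ) < a₁ → v (Sum.inl i) ≠ 0) ∧
        (∀ i : Fin (a₂ + b₂), (i : ℕ) < a₂ → v (Sum.inr i) ≠ 0) ∧
        (∀ i j, v i ≠ 0 → v i = v j → i = j) ∧
        (∀ x : Fin N, x.succ ∈ Set.range v ↔ x ∈ T) ∧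
        ((univ : Finset (Fin (a₁ + b₁))).filter
            (fun i : Fin (a₁ + b₁) => a₁ ≤ (i : ℕ) ∧ v (Sum.inl i) ≠ 0)).card = b₁f ∧
        ((univ : Finset (Fin (a₂ + b₂))).filter
            (fun i : Fin (a₂ + b₂) => a₂ ≤ (i : ℕ) ∧ v (Sum.inr i) ≠ 0)).card = b₂f) then
      ((Real.sqrt (Nat.factorial T.card * b₁.choose b₁f * b₂.choose b₂f) : ℂ))⁻¹
    else 0

section

variable {N : ℕ}

section Sequences

variable {ι κ : Type*}

/-- The type of a sequence: the labels `x` with `x.succ` among its entries (`0` is padding). -/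
def seqType (w : ι → Fin (N + 1)) : Finset (Fin N) :=
  univ.filter fun x => x.succ ∈ Set.range w

def CollisionFree (w : ι → Fin (N + 1)) : Prop :=
  ∀ i j, w i ≠ 0 → w i = w j → i = j

theorem mem_seqType {w : ι → Fin (N + 1)} {x : Fin N} : x ∈ seqType w ↔ ∃ i, w i = x.succ := by
  simp [seqType]

theorem seqType_eq_iff {w : ι → Fin (N + 1)} {T : Finset (Fin N)} :
    seqType w = T ↔ ∀ x : Fin N, x.succ ∈ Set.range w ↔ x ∈ T := by
  simp [seqType, Finset.ext_iff]

theorem not_disjoint_seqType_of_eq {w : ι → Fin (N + 1)} {w' : κ → Fin (N + 1)} {i : ι} {j : κ}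
    (hi : w i ≠ 0) (hij : w i = w' j) : ¬Disjoint (seqType w) (seqType w') :=
  not_disjoint_iff.2 ⟨(w i).pred hi, mem_seqType.2 ⟨i, by simp⟩, mem_seqType.2 ⟨j, by simp [hij]⟩⟩

theorem CollisionFree.card_seqType [Fintype ι] {w : ι → Fin (N + 1)} (hw : CollisionFree w) :
    #(seqType w) = #{i | w i ≠ 0} := by
  symm
  refine card_bij (fun i hi => (w i).pred (mem_filter.1 hi).2) (fun i hi => ?_)
    (fun i hi j hj hij => ?_) (fun x hx => ?_)
  · simp [seqType]
  · exact hw i j (mem_filter.1 hi).2 (by simpa using hij)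
  · obtain ⟨i, hi⟩ := mem_seqType.1 hx
    exact ⟨i, by simp [hi, Fin.succ_ne_zero], by simp [hi]⟩

theorem seqType_sum (v : ι ⊕ κ → Fin (N + 1)) :
    seqType v = seqType (v ∘ Sum.inl) ∪ seqType (v ∘ Sum.inr) := by
  ext x
  simp [seqType, Sum.range_eq]

theorem collisionFree_sum_iff {v : ι ⊕ κ → Fin (N + 1)} :
    CollisionFree v ↔ CollisionFree (v ∘ Sum.inl) ∧ CollisionFree (v ∘ Sum.inr) ∧
      Disjoint (seqType (v ∘ Sum.inl)) (seqType (v ∘ Sum.inr)) := by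
  constructor
  · intro hv
    refine ⟨fun i j hi hij => Sum.inl_injective (hv _ _ hi hij),
      fun i j hi hij => Sum.inr_injective (hv _ _ hi hij), disjoint_left.2 fun x hl hr => ?_⟩
    obtain ⟨i, hi⟩ := mem_seqType.1 hl
    obtain ⟨j, hj⟩ := mem_seqType.1 hr
    exact Sum.inl_ne_inr (hv (.inl i) (.inr j) (fun h => x.succ_ne_zero (hi.symm.trans h))
      (hi.trans hj.symm))
  · rintro ⟨hl, hr, hdisj⟩ (i | i) (j | j) hi hij
    · exact congrArg _ (hl i j hi hij)
    · exact absurd hdisj (not_disjoint_seqType_of_eq hi hij)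
    · exact absurd hdisj.symm (not_disjoint_seqType_of_eq hi hij)
    · exact congrArg _ (hr i j hi hij)

end Sequences

/-- The number of nonzero entries of `w` in its last `b` positions, the `B` registers. -/
def bCount (a : ℕ) {b : ℕ} (w : Fin (a + b) → Fin (N + 1)) : ℕ :=
  #{i : Fin (a + b) | a ≤ (i : ℕ) ∧ w i ≠ 0}

theorem card_filter_ne_zero_eq_add_bCount {a b : ℕ} {w : Fin (a + b) → Fin (N + 1)}
    (hA : ∀ i : Fin (a + b), (i : ℕ) < a → w i ≠ 0) :
    #{i | w i ≠ 0} = a + bCount a w := by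
  rw [bCount, ← card_filter_add_card_filter_not (fun i : Fin (a + b) => (i : ℕ) < a),
    filter_filter, filter_filter]
  congr 1
  · rw [filter_congr fun i _ => and_iff_right_of_imp (hA i), Fin.card_filter_val_lt]
    omega
  · simp only [not_lt, and_comm]

theorem CollisionFree.card_seqType_eq_add_bCount {a b : ℕ} {w : Fin (a + b) → Fin (N + 1)}
    (hw : CollisionFree w) (hA : ∀ i : Fin (a + b), (i : ℕ) < a → w i ≠ 0) :
    #(seqType w) = a + bCount a w := by
  rw [hw.card_seqType, card_filter_ne_zero_eq_add_bCount hA]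

def IsTypedSeq {b₁ b₂ : ℕ} (a₁ a₂ : ℕ) (T : Finset (Fin N))
    (v : Fin (a₁ + b₁) ⊕ Fin (a₂ + b₂) → Fin (N + 1)) : Prop :=
  (∀ i : Fin (a₁ + b₁), (i : ℕ) < a₁ → v (Sum.inl i) ≠ 0) ∧
    (∀ i : Fin (a₂ + b₂), (i : ℕ) < a₂ → v (Sum.inr i) ≠ 0) ∧ CollisionFree v ∧ seqType v = T

namespace IsTypedSeq

variable {a₁ b₁ a₂ b₂ : ℕ} {T : Finset (Fin N)} {v : Fin (a₁ + b₁) ⊕ Fin (a₂ + b₂) → Fin (N + 1)}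

theorem disjoint (hv : IsTypedSeq a₁ a₂ T v) :
    Disjoint (seqType (v ∘ Sum.inl)) (seqType (v ∘ Sum.inr)) :=
  (collisionFree_sum_iff.1 hv.2.2.1).2.2

theorem union_eq (hv : IsTypedSeq a₁ a₂ T v) :
    seqType (v ∘ Sum.inl) ∪ seqType (v ∘ Sum.inr) = T :=
  (seqType_sum v).symm.trans hv.2.2.2

theorem sdiff_seqType_inl (hv : IsTypedSeq a₁ a₂ T v) :
    T \ seqType (v ∘ Sum.inl) = seqType (v ∘ Sum.inr) := by
  rw [← hv.union_eq, union_sdiff_cancel_left hv.disjoint]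

theorem card_seqType_inl (hv : IsTypedSeq a₁ a₂ T v) :
    #(seqType (v ∘ Sum.inl)) = a₁ + bCount a₁ (v ∘ Sum.inl) :=
  (collisionFree_sum_iff.1 hv.2.2.1).1.card_seqType_eq_add_bCount hv.1

theorem card_seqType_inr (hv : IsTypedSeq a₁ a₂ T v) :
    #(seqType (v ∘ Sum.inr)) = a₂ + bCount a₂ (v ∘ Sum.inr) :=
  (collisionFree_sum_iff.1 hv.2.2.1).2.1.card_seqType_eq_add_bCount hv.2.1

theorem card_seqType_inl_eq_iff (hv : IsTypedSeq a₁ a₂ T v) {b₁f b₂f : ℕ}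
    (hT : #T = a₁ + a₂ + b₁f + b₂f) :
    #(seqType (v ∘ Sum.inl)) = a₁ + b₁f ↔
      bCount a₁ (v ∘ Sum.inl) = b₁f ∧ bCount a₂ (v ∘ Sum.inr) = b₂f := by
  have hT' := card_union_of_disjoint hv.disjoint
  rw [hv.union_eq, hv.card_seqType_inl, hv.card_seqType_inr] at hT'
  rw [hv.card_seqType_inl]
  omega

end IsTypedSeq

theorem zVec_apply (a b : ℕ) (T : Finset (Fin N)) (w : Fin (a + b) → Fin (N + 1)) :
    zVec N a b T w =
      if (∀ i : Fin (a + b), (i : ℕ) < a → w i ≠ 0) ∧ CollisionFree w ∧ seqType w = T then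
        ((√(T.card.factorial * b.choose (T.card - a)) : ℝ) : ℂ)⁻¹
      else 0 := by
  simp only [zVec, CollisionFree, seqType_eq_iff]

theorem zVecCount_apply (a₁ b₁ a₂ b₂ b₁f b₂f : ℕ) (T : Finset (Fin N))
    (v : Fin (a₁ + b₁) ⊕ Fin (a₂ + b₂) → Fin (N + 1)) :
    zVecCount N a₁ b₁ a₂ b₂ b₁f b₂f T v =
      if IsTypedSeq a₁ a₂ T v ∧ bCount a₁ (v ∘ Sum.inl) = b₁f ∧ bCount a₂ (v ∘ Sum.inr) = b₂f then
        ((√(T.card.factorial * b₁.choose b₁f * b₂.choose b₂f) : ℝ) : ℂ)⁻¹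
      else 0 := by
  simp only [zVecCount, IsTypedSeq, bCount, CollisionFree, seqType_eq_iff, Function.comp_apply,
    and_assoc]

theorem eq_and_eq_sdiff_iff {α : Type*} [DecidableEq α] {L R X T : Finset α} (hX : X ⊆ T) :
    L = X ∧ R = T \ X ↔ L = X ∧ Disjoint L R ∧ L ∪ R = T := by
  constructor
  · rintro ⟨rfl, rfl⟩
    exact ⟨rfl, disjoint_sdiff, union_sdiff_of_subset hX⟩
  · rintro ⟨rfl, hLR, rfl⟩
    exact ⟨rfl, (union_sdiff_cancel_left hLR).symm⟩

theorem tensF_zVec_sdiff_apply (a₁ b₁ a₂ b₂ : ℕ) {X T : Finset (Fin N)} (hX : X ⊆ T)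
    (v : Fin (a₁ + b₁) ⊕ Fin (a₂ + b₂) → Fin (N + 1)) :
    tensF (zVec N a₁ b₁ X) (zVec N a₂ b₂ (T \ X)) v =
      if IsTypedSeq a₁ a₂ T v ∧ seqType (v ∘ Sum.inl) = X then
        ((√(X.card.factorial * b₁.choose (X.card - a₁)) : ℝ) : ℂ)⁻¹ *
          ((√((T \ X).card.factorial * b₂.choose ((T \ X).card - a₂)) : ℝ) : ℂ)⁻¹
      else 0 := by
  rw [tensF, zVec_apply, zVec_apply, ite_zero_mul_ite_zero]
  refine if_congr ?_ rfl rfl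
  have := eq_and_eq_sdiff_iff (L := seqType (v ∘ Sum.inl)) (R := seqType (v ∘ Sum.inr)) hX
  rw [IsTypedSeq, collisionFree_sum_iff, seqType_sum]
  tauto

theorem inv_sqrt_choose_mul (k m x y : ℕ) :
    ((√((k + m).choose k) : ℝ) : ℂ)⁻¹ *
        (((√(k.factorial * x) : ℝ) : ℂ)⁻¹ * ((√(m.factorial * y) : ℝ) : ℂ)⁻¹)
      = ((√((k + m).factorial * x * y) : ℝ) : ℂ)⁻¹ := by
  rw [← mul_inv, ← mul_inv, ← Complex.ofReal_mul, ← Complex.ofReal_mul,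
    ← Real.sqrt_mul (by positivity), ← Real.sqrt_mul (by positivity),
    ← Nat.add_choose_mul_factorial_mul_factorial, Nat.choose_symm_add]
  push_cast
  ring_nf

end

/-- `|𝔷²(T,B₁,B₂)^{b₁^f,b₂^f}⟩
  = C(|T|, a₁+b₁^f)^{-1/2} Σ_{X⊆T, |X|=a₁+b₁^f} |𝔷(X,B₁)⟩ ⊗ |𝔷(T∖X,B₂)⟩`. -/
theorem zVecCount_split (N a₁ a₂ b₁ b₂ b₁f b₂f : ℕ) (T : Finset (Fin N))
    (hT : T.card = a₁ + a₂ + b₁f + b₂f) :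
    zVecCount N a₁ b₁ a₂ b₂ b₁f b₂f T
      = ((Real.sqrt (T.card.choose (a₁ + b₁f)) : ℂ))⁻¹ •
          ∑ X ∈ T.powerset.filter (fun X => X.card = a₁ + b₁f),
            tensF (zVec N a₁ b₁ X) (zVec N a₂ b₂ (T \ X)) := by
  funext v
  rw [Pi.smul_apply, Finset.sum_apply, smul_eq_mul, zVecCount_apply,
    sum_congr rfl fun X hX => tensF_zVec_sdiff_apply a₁ b₁ a₂ b₂
      (mem_powerset.1 (mem_filter.1 hX).1) v]
  by_cases hv : IsTypedSeq a₁ a₂ T v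
  · have hsub : seqType (v ∘ Sum.inl) ⊆ T := hv.union_eq ▸ subset_union_left
    simp only [and_iff_right hv, sum_ite_eq, mem_filter, mem_powerset, hsub, true_and,
      hv.card_seqType_inl_eq_iff hT]
    split_ifs with hc
    · have hT' : #T = (a₁ + b₁f) + (a₂ + b₂f) := by omega
      rw [hv.sdiff_seqType_inl, hv.card_seqType_inl, hv.card_seqType_inr, hc.1, hc.2, hT',
        Nat.add_sub_cancel_left, Nat.add_sub_cancel_left, inv_sqrt_choose_mul]
    · rw [mul_zero]
  · simp only [hv, false_and, if_false, sum_const_zero, mul_zero]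

end
end
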